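/- arXiv:1503.05736 — 6 statements merged into one kernel-verified Lean document; each statement's English description precedes it below -/
import Mathlib

section
/- Let K = ℚ(√D) with D > 1 squarefree, and δ as above. Let α be a totally positive integer of K with N(α) ≤ δ such that no rational integer n ≥ 2 divides α in O_K. Then α cannot be written as a + b with a, b ∈ O_K both totally positive. -/
/-!
Write `β = m₁ + n₁ω` and `γ = m₂ + n₂ω`. As `ω` is irrational, `α = β + γ` forces
`(m, n) = (m₁ + m₂, n₁ + n₂)`. The determinant identity `βγ' - β'γ = (n₁m₂ - m₁n₂)(ω - ω')`,
with `ω - ω' = δ`, gives `N(α) = ββ' + γγ' + βγ' + β'γ > |n₁m₂ - m₁n₂| δ`. A vanishing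
determinant is impossible: by primitivity of `(m, n)` it would make `β = kα` and `γ = (1 - k)α`
for an integer `k`, and these cannot both be positive. Hence `N(α) > δ`.
-/

lemma Squarefree.not_isSquare {D : ℕ} (hD : Squarefree D) (hD1 : 1 < D) : ¬ IsSquare D := by
  rintro ⟨k, rfl⟩
  obtain rfl : k = 1 := Nat.isUnit_iff.mp (hD k dvd_rfl)
  omega

lemma Irrational.eq_and_eq_of_add_mul_eq {ω : ℝ} (hω : Irrational ω) {a b c d : ℤ}
    (h : (a : ℝ) + b * ω = c + d * ω) : a = c ∧ b = d := by
  have hbd : b = d := by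
    by_contra hne
    apply (hω.intCast_mul (sub_ne_zero.mpr hne)).ne_int (c - a)
    push_cast
    linarith
  subst hbd
  exact ⟨by exact_mod_cast add_right_cancel h, rfl⟩

lemma abs_mul_sub_mul_lt_add_mul_add {b b' c c' : ℝ} (hb : 0 < b) (hb' : 0 < b')
    (hc : 0 < c) (hc' : 0 < c') : |b * c' - b' * c| < (b + c) * (b' + c') := by
  have := mul_pos hb hb'
  have := mul_pos hc hc'
  rw [abs_lt]
  constructor <;> nlinarith [mul_pos hb hc', mul_pos hb' hc]

lemma isCoprime_of_forall_not_dvd {m n : ℤ} (h0 : m ≠ 0 ∨ n ≠ 0)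
    (h : ∀ z : ℤ, 2 ≤ z → ¬(z ∣ m ∧ z ∣ n)) : IsCoprime m n := by
  rw [Int.isCoprime_iff_gcd_eq_one]
  have hpos : 0 < Int.gcd m n := Int.gcd_pos_iff.mpr h0
  by_contra hne
  exact h (Int.gcd m n) (by omega) ⟨Int.gcd_dvd_left m n, Int.gcd_dvd_right m n⟩

lemma IsCoprime.exists_eq_mul_of_mul_eq {m n m₁ n₁ : ℤ} (h : IsCoprime m n)
    (he : n₁ * m = m₁ * n) : ∃ k, m₁ = k * m ∧ n₁ = k * n := by
  obtain ⟨u, v, huv⟩ := h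
  exact ⟨u * m₁ + v * n₁, by linear_combination (-m₁) * huv - v * he,
    by linear_combination (-n₁) * huv + u * he⟩

section Decomposition

variable {ω ω' : ℝ} {m₁ n₁ m₂ n₂ : ℤ}

lemma det_ne_zero_of_isCoprime_add (hcop : IsCoprime (m₁ + m₂) (n₁ + n₂))
    (hb : 0 < (m₁ : ℝ) + n₁ * ω) (hc : 0 < (m₂ : ℝ) + n₂ * ω) : n₁ * m₂ - m₁ * n₂ ≠ 0 := by
  intro hdet
  obtain ⟨k, hm, hn⟩ :=
    hcop.exists_eq_mul_of_mul_eq (m₁ := m₁) (n₁ := n₁) (by linear_combination hdet)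
  have hm' : (m₁ : ℝ) = k * (m₁ + m₂) := by exact_mod_cast hm
  have hn' : (n₁ : ℝ) = k * (n₁ + n₂) := by exact_mod_cast hn
  set α : ℝ := (m₁ + m₂ : ℝ) + (n₁ + n₂) * ω
  have hα : 0 < α := by linarith
  have hb' : 0 < (k : ℝ) * α := by linear_combination hb + hm' + ω * hn'
  have hc' : 0 < (1 - k : ℝ) * α := by linear_combination hc - hm' - ω * hn'
  have hk₀ : (0 : ℝ) < k := pos_of_mul_pos_left hb' hα.le
  have hk₁ : (0 : ℝ) < 1 - k := pos_of_mul_pos_left hc' hα.le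
  have : (0 : ℤ) < k ∧ k < 1 := ⟨by exact_mod_cast hk₀, by exact_mod_cast sub_pos.mp hk₁⟩
  omega

theorem sub_lt_norm_add (hω : ω' < ω) (hcop : IsCoprime (m₁ + m₂) (n₁ + n₂))
    (hb : 0 < (m₁ : ℝ) + n₁ * ω) (hb' : 0 < (m₁ : ℝ) + n₁ * ω')
    (hc : 0 < (m₂ : ℝ) + n₂ * ω) (hc' : 0 < (m₂ : ℝ) + n₂ * ω') :
    ω - ω' < ((m₁ + n₁ * ω) + (m₂ + n₂ * ω)) * ((m₁ + n₁ * ω') + (m₂ + n₂ * ω')) := by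
  have hdet : ((m₁ : ℝ) + n₁ * ω) * (m₂ + n₂ * ω') - (m₁ + n₁ * ω') * (m₂ + n₂ * ω)
      = ((n₁ * m₂ - m₁ * n₂ : ℤ) : ℝ) * (ω - ω') := by
    push_cast; ring
  have hone : (1 : ℝ) ≤ |((n₁ * m₂ - m₁ * n₂ : ℤ) : ℝ)| := by
    exact_mod_cast Int.one_le_abs (det_ne_zero_of_isCoprime_add hcop hb hc)
  calc ω - ω' ≤ |((n₁ * m₂ - m₁ * n₂ : ℤ) : ℝ)| * (ω - ω') :=
        le_mul_of_one_le_left (sub_pos.mpr hω).le hone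
    _ = |((m₁ : ℝ) + n₁ * ω) * (m₂ + n₂ * ω') - (m₁ + n₁ * ω') * (m₂ + n₂ * ω)| := by
        rw [hdet, abs_mul, abs_of_pos (sub_pos.mpr hω)]
    _ < _ := abs_mul_sub_mul_lt_add_mul_add hb hb' hc hc'

end Decomposition

lemma Squarefree.irrational_sqrt {D : ℕ} (hD : Squarefree D) (hD1 : 1 < D) :
    Irrational √D :=
  irrational_sqrt_natCast_iff.mpr (hD.not_isSquare hD1)

theorem stmt2_general (D : ℕ) (hD : Squarefree D) (hD1 : 1 < D) (ω ω' δ : ℝ)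
    (hω : ω = if D % 4 = 1 then (1 + Real.sqrt D) / 2 else Real.sqrt D)
    (hω' : ω' = if D % 4 = 1 then (1 - Real.sqrt D) / 2 else -Real.sqrt D)
    (hδ : δ = if D % 4 = 1 then Real.sqrt D else 2 * Real.sqrt D)
    (m n : ℤ)
    (hnorm : ((m : ℝ) + (n : ℝ) * ω) * ((m : ℝ) + (n : ℝ) * ω') ≤ δ)
    (hdvd : ∀ z : ℤ, 2 ≤ z → ¬(z ∣ m ∧ z ∣ n)) :
    ¬ ∃ m₁ n₁ m₂ n₂ : ℤ,
      (m : ℝ) + (n : ℝ) * ω = ((m₁ : ℝ) + (n₁ : ℝ) * ω) + ((m₂ : ℝ) + (n₂ : ℝ) * ω) ∧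
      0 < (m₁ : ℝ) + (n₁ : ℝ) * ω ∧ 0 < (m₁ : ℝ) + (n₁ : ℝ) * ω' ∧
      0 < (m₂ : ℝ) + (n₂ : ℝ) * ω ∧ 0 < (m₂ : ℝ) + (n₂ : ℝ) * ω' := by
  rintro ⟨m₁, n₁, m₂, n₂, heq, hb, hb', hc, hc'⟩
  have hsqrt : Irrational √D := hD.irrational_sqrt hD1
  have hirr : Irrational ω := by
    rw [hω]
    split_ifs
    · simpa using (hsqrt.intCast_add 1).div_natCast two_ne_zero
    · exact hsqrt
  have hδ' : δ = ω - ω' := by rw [hω, hω', hδ]; split_ifs <;> ring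
  have hωω' : ω' < ω := by
    have : 0 < √(D : ℝ) := Real.sqrt_pos.mpr (Nat.cast_pos.mpr (by omega))
    rw [hω, hω']; split_ifs <;> linarith
  obtain ⟨rfl, rfl⟩ : m = m₁ + m₂ ∧ n = n₁ + n₂ :=
    hirr.eq_and_eq_of_add_mul_eq (by push_cast; linarith)
  have hne : m₁ + m₂ ≠ 0 ∨ n₁ + n₂ ≠ 0 := by
    by_contra! h
    have : ((m₁ + m₂ : ℤ) : ℝ) + ((n₁ + n₂ : ℤ) : ℝ) * ω = 0 := by simp [h.1, h.2]
    push_cast at this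
    linarith
  have := sub_lt_norm_add hωω' (isCoprime_of_forall_not_dvd hne hdvd) hb hb' hc hc'
  push_cast at hnorm
  linarith

/-- If `α = m + n·ω ∈ O_K` is totally positive, `N(α) ≤ δ`, and no rational integer
`≥ 2` divides `α` in `O_K`, then `α` is not a sum of two totally positive integers. -/
theorem stmt2 (D : ℕ) (hD : Squarefree D) (hD1 : 1 < D) (ω ω' δ : ℝ)
    (hω : ω = if D % 4 = 1 then (1 + Real.sqrt D) / 2 else Real.sqrt D)
    (hω' : ω' = if D % 4 = 1 then (1 - Real.sqrt D) / 2 else -Real.sqrt D)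
    (hδ : δ = if D % 4 = 1 then Real.sqrt D else 2 * Real.sqrt D)
    (m n : ℤ)
    (hpos : 0 < (m : ℝ) + (n : ℝ) * ω) (hpos' : 0 < (m : ℝ) + (n : ℝ) * ω')
    (hnorm : ((m : ℝ) + (n : ℝ) * ω) * ((m : ℝ) + (n : ℝ) * ω') ≤ δ)
    (hdvd : ∀ z : ℤ, 2 ≤ z → ¬(z ∣ m ∧ z ∣ n)) :
    ¬ ∃ m₁ n₁ m₂ n₂ : ℤ,
      (m : ℝ) + (n : ℝ) * ω = ((m₁ : ℝ) + (n₁ : ℝ) * ω) + ((m₂ : ℝ) + (n₂ : ℝ) * ω) ∧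
      0 < (m₁ : ℝ) + (n₁ : ℝ) * ω ∧ 0 < (m₁ : ℝ) + (n₁ : ℝ) * ω' ∧
      0 < (m₂ : ℝ) + (n₂ : ℝ) * ω ∧ 0 < (m₂ : ℝ) + (n₂ : ℝ) * ω' :=
  stmt2_general D hD hD1 ω ω' δ hω hω' hδ m n hnorm hdvd
end

section
/- Let u ≥ 2, ρ_± = (u ± √(u²+4))/2. Let D be such that √D = [k; \overline{u,…,u,2k}] (with ℓ copies of u) for some k, and set c'_± = (±1 ± (k − √D)ρ_±)/√(4+u²). Then ρ_−² < |c'_−| < 1. -/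
/-- For `√D = [k; \overline{u,…,u,2k}]` with `u ≥ 2` and `ℓ` copies of `u`,
the coefficient `c'₋ = (-1 - (k - √D)ρ₋)/√(4+u²)` satisfies `ρ₋² < |c'₋| < 1`. -/
theorem stmt10 (D u k ℓ : ℕ) (hu : 2 ≤ u) (hℓ : 1 ≤ ℓ)
    (hh : (GenContFract.of (Real.sqrt D)).h = (k : ℝ))
    (hcf : ∀ n : ℕ, (GenContFract.of (Real.sqrt D)).partDens.get? n =
      some (if n % (ℓ + 1) = ℓ then (2 * k : ℝ) else (u : ℝ)))
    (ρm cm : ℝ)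
    (hρm : ρm = ((u : ℝ) - Real.sqrt ((u : ℝ) ^ 2 + 4)) / 2)
    (hcm : cm = (-1 - ((k : ℝ) - Real.sqrt D) * ρm) / Real.sqrt (4 + (u : ℝ) ^ 2)) :
    ρm ^ 2 < |cm| ∧ |cm| < 1 := by
  have hfloor : (⌊Real.sqrt D⌋ : ℝ) = (k : ℝ) := by
    rw [← GenContFract.of_h_eq_floor]; exact hh
  have hu2 : (2 : ℝ) ≤ (u : ℝ) := by exact_mod_cast hu
  set w : ℝ := Real.sqrt ((u : ℝ) ^ 2 + 4) with hw
  have hw2 : w ^ 2 = (u : ℝ) ^ 2 + 4 := Real.sq_sqrt (by positivity)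
  have hw0 : 0 ≤ w := Real.sqrt_nonneg _
  have hwgt : 2 < w := by nlinarith
  have hwlt : w < (u : ℝ) + 2 := by nlinarith
  have hwu : (u : ℝ) < w := by nlinarith
  set s : ℝ := Real.sqrt D - (k : ℝ) with hs
  have hs0 : 0 ≤ s := by
    have := Int.floor_le (Real.sqrt D); rw [hfloor] at this; linarith [this]
  have hs1 : s < 1 := by
    have := Int.lt_floor_add_one (Real.sqrt D); rw [hfloor] at this; linarith [this]
  have hρneg : ρm < 0 := by rw [hρm]; linarith
  have hρgt : -1 < ρm := by rw [hρm]; linarith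
  have hcm' : cm = (-1 + s * ρm) / w := by
    rw [hcm, hs]; congr 2
    · ring
    · ring
  have hsρ : s * ρm ≤ 0 := mul_nonpos_of_nonneg_of_nonpos hs0 (le_of_lt hρneg)
  have hcmneg : cm < 0 := by
    rw [hcm']
    apply div_neg_of_neg_of_pos (by linarith) (by linarith)
  have habs : |cm| = (1 - s * ρm) / w := by
    rw [abs_of_neg hcmneg, hcm']; ring
  rw [habs]
  constructor
  · rw [lt_div_iff₀ (by linarith)]
    have key : ρm ^ 2 * w < 1 := by
      rw [hρm]; nlinarith [sq_nonneg ((u:ℝ) - w), sq_nonneg w]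
    linarith
  · rw [div_lt_one (by linarith)]
    have : -(s * ρm) < 1 := by nlinarith
    linarith
end

section
/- Let γ = [k; \overline{u,…,u,2k}] with ℓ entries u in the period, and let p_i/q_i be the convergents. Then γ = √D for some natural number D if and only if q_ℓ divides k·p_ℓ + p_{ℓ−1}. -/
/-!
Write `xₙ` for the complete quotients of `γ`, so `γ = k + 1/x₁` and `xₙ₊₁ = bₙ + 1/xₙ₊₂`.
Periodicity of the partial denominators makes `x_{ℓ+2}` and `x₁` have the same continued
fraction, hence be equal, so `x_{ℓ+1} = 2k + 1/x₁ = γ + k`. Unwinding the `ℓ` entries `u`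
expresses `x₁` as a Möbius transform of `x_{ℓ+1}` with coefficients `q_ℓ, q_{ℓ-1}, q_{ℓ-2}`,
and `1/x₁ = γ - k` turns this into `q_ℓ γ² = k p_ℓ + p_{ℓ-1}`. Since `γ ≥ 0`, `γ` is the
square root of a natural number exactly when `q_ℓ` divides the right-hand side.
-/

/-- With `Q` the continuants of `(u, u, …)`, this is the expansion `x₀ = [u; u, …, u, xₙ₊₁]`
(`n + 1` entries `u`) written as `x₀ = (Qₙ₊₂ xₙ₊₁ + Qₙ₊₁) / (Qₙ₊₁ xₙ₊₁ + Qₙ)`. -/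
theorem mul_continuant_eq_of_eq_add_inv {K : Type*} [Field K] {u : K} {Q : ℕ → K}
    (h0 : Q 0 = 0) (h1 : Q 1 = 1) (hrec : ∀ n, Q (n + 2) = u * Q (n + 1) + Q n) {n : ℕ}
    {x : ℕ → K} (hx : ∀ i ≤ n, x i = u + (x (i + 1))⁻¹) (hx0 : ∀ i, x (i + 1) ≠ 0) :
    x 0 * (Q (n + 1) * x (n + 1) + Q n) = Q (n + 2) * x (n + 1) + Q (n + 1) := by
  induction n generalizing x with
  | zero =>
    rw [hx 0 le_rfl, hrec, h0, h1]
    field_simp [hx0 0]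
    ring
  | succ n ih =>
    have hshift : x 1 * (Q (n + 1) * x (n + 2) + Q n) = Q (n + 2) * x (n + 2) + Q (n + 1) :=
      ih (x := fun i => x (i + 1)) (fun i hi => hx (i + 1) (by omega)) (fun i => hx0 (i + 1))
    have hx1 : x 1 * (x 1)⁻¹ = 1 := mul_inv_cancel₀ (hx0 0)
    rw [hx 0 (Nat.zero_le _), hrec (n + 1)]
    linear_combination -(x 1)⁻¹ * hshift + (Q (n + 1) * x (n + 2) + Q n) * hx1 - hrec n

theorem pos_succ_of_eq_mul_add {R : Type*} [Semiring R] [PartialOrder R] [IsStrictOrderedRing R]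
    {u : R} {Q : ℕ → R} (hu : 0 < u) (h0 : 0 ≤ Q 0) (h1 : 0 < Q 1)
    (hrec : ∀ n, Q (n + 2) = u * Q (n + 1) + Q n) (n : ℕ) : 0 < Q (n + 1) := by
  suffices ∀ n, 0 ≤ Q n ∧ 0 < Q (n + 1) from (this n).2
  intro n
  induction n with
  | zero => exact ⟨h0, h1⟩
  | succ n ih => exact ⟨ih.2.le, hrec n ▸ add_pos_of_pos_of_nonneg (mul_pos hu ih.2) ih.1⟩

theorem exists_nat_eq_sqrt_iff_dvd {q N : ℤ} {x : ℝ} (hq : q ≠ 0) (hx : 0 ≤ x)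
    (h : q * x ^ 2 = N) : (∃ d : ℕ, x = √d) ↔ q ∣ N := by
  constructor
  · rintro ⟨d, rfl⟩
    rw [Real.sq_sqrt d.cast_nonneg] at h
    exact ⟨d, by exact_mod_cast h.symm⟩
  · rintro ⟨c, rfl⟩
    have hxc : x ^ 2 = c := by
      push_cast at h
      exact mul_left_cancel₀ (by exact_mod_cast hq) h
    have hc : 0 ≤ c := by exact_mod_cast hxc ▸ sq_nonneg x
    refine ⟨c.toNat, ?_⟩
    rw [show ((c.toNat : ℕ) : ℝ) = c by exact_mod_cast Int.toNat_of_nonneg hc, ← hxc,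
      Real.sqrt_sq hx]

namespace GenContFract

open Int

variable {K : Type*} [Field K] [LinearOrder K] [FloorRing K]

/-- The complete quotient `vₙ` in `v = [b₀; b₁, …, bₙ₋₁, vₙ]`. -/
def completeQuot (v : K) (n : ℕ) : K := (fun w => (fract w)⁻¹)^[n] v

@[simp]
theorem completeQuot_zero (v : K) : completeQuot v 0 = v := rfl

theorem completeQuot_succ (v : K) (n : ℕ) :
    completeQuot v (n + 1) = (fract (completeQuot v n))⁻¹ :=
  Function.iterate_succ_apply' _ _ _

theorem completeQuot_eq_floor_add_inv (v : K) (n : ℕ) :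
    completeQuot v n = ⌊completeQuot v n⌋ + (completeQuot v (n + 1))⁻¹ := by
  rw [completeQuot_succ, inv_inv, floor_add_fract]

theorem of_s_get?_eq_map_partDens (v : K) (m : ℕ) :
    (GenContFract.of v).s.get? m = ((GenContFract.of v).partDens.get? m).map (⟨1, ·⟩) := by
  cases hs : (GenContFract.of v).s.get? m with
  | none => simp [partDens, hs]
  | some gp =>
    obtain ⟨a, b⟩ := gp
    obtain ⟨rfl, -⟩ := of_partNum_eq_one_and_exists_int_partDen_eq hs
    simp [partDens, hs]

variable [IsStrictOrderedRing K]

theorem partDens_of_completeQuot (v : K) (n m : ℕ) :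
    (GenContFract.of (completeQuot v n)).partDens.get? m =
      (GenContFract.of v).partDens.get? (n + m) := by
  induction n generalizing m with
  | zero => simp
  | succ n ih =>
    simp only [partDens, Stream'.Seq.map_get?, completeQuot_succ, ← of_s_succ] at ih ⊢
    rw [ih, Nat.add_right_comm n 1 m, Nat.add_assoc]

variable {v b : K} {n : ℕ}

theorem fract_ne_zero_of_partDens_get?_zero (h : (GenContFract.of v).partDens.get? 0 = some b) :
    fract v ≠ 0 := by
  intro hv
  rw [← floor_add_fract v, hv, add_zero, partDens, Stream'.Seq.map_get?, of_s_of_int] at h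
  simp at h

theorem floor_inv_fract_of_partDens_get?_zero
    (h : (GenContFract.of v).partDens.get? 0 = some b) : (⌊(fract v)⁻¹⌋ : K) = b := by
  have hs := of_s_head (fract_ne_zero_of_partDens_get?_zero h)
  rw [Stream'.Seq.head] at hs
  simpa [partDens, Stream'.Seq.map_get?, hs] using h

theorem one_lt_completeQuot_succ (h : (GenContFract.of v).partDens.get? n = some b) :
    1 < completeQuot v (n + 1) := by
  have h' : (GenContFract.of (completeQuot v n)).partDens.get? 0 = some b :=
    (partDens_of_completeQuot v n 0).trans h
  rw [completeQuot_succ]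
  exact one_lt_inv_iff₀.2
    ⟨(fract_nonneg _).lt_of_ne' (fract_ne_zero_of_partDens_get?_zero h'), fract_lt_one _⟩

theorem floor_completeQuot_succ (h : (GenContFract.of v).partDens.get? n = some b) :
    (⌊completeQuot v (n + 1)⌋ : K) = b := by
  have h' : (GenContFract.of (completeQuot v n)).partDens.get? 0 = some b :=
    (partDens_of_completeQuot v n 0).trans h
  rw [completeQuot_succ]
  exact floor_inv_fract_of_partDens_get?_zero h'

theorem completeQuot_succ_eq_add_inv (h : (GenContFract.of v).partDens.get? n = some b) :
    completeQuot v (n + 1) = b + (completeQuot v (n + 2))⁻¹ := by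
  rw [← floor_completeQuot_succ h]
  exact completeQuot_eq_floor_add_inv v (n + 1)

theorem eq_of_of_h_eq_of_partDens_eq [Archimedean K] [TopologicalSpace K] [OrderTopology K]
    {v w : K} (hh : (GenContFract.of v).h = (GenContFract.of w).h)
    (hd : (GenContFract.of v).partDens = (GenContFract.of w).partDens) : v = w := by
  have hof : GenContFract.of v = GenContFract.of w := by
    ext1
    · exact hh
    · exact Stream'.Seq.ext fun m => by
        rw [of_s_get?_eq_map_partDens, hd, of_s_get?_eq_map_partDens]
  exact tendsto_nhds_unique (of_convergence v) (hof ▸ of_convergence w)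

theorem completeQuot_add_period [Archimedean K] [TopologicalSpace K] [OrderTopology K] {p : ℕ}
    (hper : ∀ m, (GenContFract.of v).partDens.get? (m + p) = (GenContFract.of v).partDens.get? m)
    (h0 : (GenContFract.of v).partDens.get? 0 = some b) :
    completeQuot v (p + 1) = completeQuot v 1 := by
  refine eq_of_of_h_eq_of_partDens_eq ?_ (Stream'.Seq.ext fun m => ?_)
  · rw [of_h_eq_floor, of_h_eq_floor, floor_completeQuot_succ (n := 0) h0,
      floor_completeQuot_succ (by rwa [← zero_add p, hper])]
  · rw [partDens_of_completeQuot, partDens_of_completeQuot, ← hper (1 + m)]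
    congr 1
    omega

theorem mul_sq_eq_of_partDens_periodic {u k m : ℕ} {γ : ℝ} (hh : (GenContFract.of γ).h = k)
    (hcf : ∀ n, (GenContFract.of γ).partDens.get? n =
      some (if n % (m + 2) = m + 1 then (2 * k : ℝ) else u))
    {Q : ℕ → ℝ} (h0 : Q 0 = 0) (h1 : Q 1 = 1) (hrec : ∀ n, Q (n + 2) = u * Q (n + 1) + Q n) :
    Q (m + 2) * γ ^ 2 = k ^ 2 * Q (m + 2) + 2 * k * Q (m + 1) + Q m := by
  have hx0 : ∀ i, completeQuot γ (i + 1) ≠ 0 := fun i =>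
    (zero_lt_one.trans (one_lt_completeQuot_succ (hcf i))).ne'
  have hγ : γ = k + (completeQuot γ 1)⁻¹ := by
    have := completeQuot_eq_floor_add_inv γ 0
    rwa [completeQuot_zero, ← of_h_eq_floor, hh] at this
  have hper : completeQuot γ (m + 1 + 2) = completeQuot γ 1 :=
    completeQuot_add_period (fun n => by rw [hcf, hcf, Nat.add_mod_right]) (hcf 0)
  have hy : completeQuot γ (m + 2) = γ + k := by
    rw [completeQuot_succ_eq_add_inv (hcf (m + 1)), hper, if_pos (Nat.mod_eq_of_lt (by omega))]
    linarith
  have hu : ∀ i ≤ m, completeQuot γ (i + 1) = u + (completeQuot γ (i + 2))⁻¹ := fun i hi => by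
    rw [completeQuot_succ_eq_add_inv (hcf i), Nat.mod_eq_of_lt (by omega), if_neg (by omega)]
  have key : completeQuot γ 1 * (Q (m + 1) * (γ + k) + Q m) = Q (m + 2) * (γ + k) + Q (m + 1) := by
    rw [← hy]
    exact mul_continuant_eq_of_eq_add_inv h0 h1 hrec (x := fun i => completeQuot γ (i + 1)) hu
      (fun i => hx0 (i + 1))
  have hinv : (γ - k) * completeQuot γ 1 = 1 := by
    rw [show γ - k = (completeQuot γ 1)⁻¹ by linarith, inv_mul_cancel₀ (hx0 0)]
  linear_combination -(γ - k) * key + (Q (m + 1) * (γ + k) + Q m) * hinv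

end GenContFract

theorem stmt11_general (u k ℓ : ℕ) (hu : 0 < u) (hℓ : 1 ≤ ℓ) (γ : ℝ)
    (hh : (GenContFract.of γ).h = (k : ℝ))
    (hcf : ∀ n : ℕ, (GenContFract.of γ).partDens.get? n =
      some (if n % (ℓ + 1) = ℓ then (2 * k : ℝ) else (u : ℝ)))
    (Q : ℕ → ℤ) (h0 : Q 0 = 0) (h1 : Q 1 = 1)
    (hrec : ∀ n, Q (n + 2) = u * Q (n + 1) + Q n)
    (P : ℕ → ℤ) (hP : ∀ i, P i = k * Q (i + 1) + Q i) :
    (∃ d : ℕ, γ = Real.sqrt d) ↔ Q (ℓ + 1) ∣ k * P ℓ + P (ℓ - 1) := by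
  obtain ⟨m, rfl⟩ : ∃ m, ℓ = m + 1 := ⟨ℓ - 1, by omega⟩
  have hsq : (Q (m + 2) : ℝ) * γ ^ 2 = ((k * P (m + 1) + P m : ℤ) : ℝ) := by
    rw [hP m, show P (m + 1) = k * Q (m + 2) + Q (m + 1) from hP (m + 1)]
    push_cast
    linear_combination GenContFract.mul_sq_eq_of_partDens_periodic (Q := fun n => (Q n : ℝ)) hh hcf
      (by simp [h0]) (by simp [h1]) (fun n => by simp [hrec])
  have hγ0 : 0 ≤ γ := by
    rw [← Int.floor_nonneg, ← Int.cast_nonneg_iff (R := ℝ), ← GenContFract.of_h_eq_floor, hh]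
    positivity
  have hQ : Q (m + 2) ≠ 0 :=
    (pos_succ_of_eq_mul_add (by exact_mod_cast hu) h0.ge (by simp [h1]) hrec (m + 1)).ne'
  exact exists_nat_eq_sqrt_iff_dvd hQ hγ0 hsq

/-- Let `γ = [k; \overline{u,…,u,2k}]` with `ℓ` copies of `u`, and `p i / q i` its
convergents (here `Q n = q_{n-1}` and `P i = p_i = k q_i + q_{i-1}`).  Then
`γ = √D` for some natural number `D` iff `q_ℓ ∣ k p_ℓ + p_{ℓ-1}`. -/
theorem stmt11 (u k ℓ : ℕ) (hu : 0 < u) (hk : 0 < k) (hℓ : 1 ≤ ℓ) (γ : ℝ)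
    (hh : (GenContFract.of γ).h = (k : ℝ))
    (hcf : ∀ n : ℕ, (GenContFract.of γ).partDens.get? n =
      some (if n % (ℓ + 1) = ℓ then (2 * k : ℝ) else (u : ℝ)))
    (Q : ℕ → ℤ) (h0 : Q 0 = 0) (h1 : Q 1 = 1)
    (hrec : ∀ n, Q (n + 2) = u * Q (n + 1) + Q n)
    (P : ℕ → ℤ) (hP : ∀ i, P i = k * Q (i + 1) + Q i) :
    (∃ d : ℕ, γ = Real.sqrt d) ↔ Q (ℓ + 1) ∣ k * P ℓ + P (ℓ - 1) :=
  stmt11_general u k ℓ hu hℓ γ hh hcf Q h0 h1 hrec P hP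
end

section
/- Suppose u and q_ℓ have the same parity and 2k = q_ℓ t + u where t ∈ ℕ (with t odd if u is odd). Then √D = [k; \overline{u,…,u,2k}] with D = k² + t q_{ℓ−1} + 1 = t² q_ℓ²/4 + t (u q_ℓ + 2 q_{ℓ−1})/2 + u²/4 + 1. -/
/-!
Let `q` be the Lucas sequence `q 0 = 0`, `q 1 = 1`, `q (n + 2) = u q (n + 1) + q n` (so `q (i + 1)`
is the paper's `q_i`) and `s = √D`, so that `k < s < k + 1`. For `i + r = ℓ` put
`P_i = k - t q_i q_r` and `C_i = 1 + t q_i q_{r+1}`. The addition formulas for `q` give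
`C_i C_{i+1} = D - P_i²` and `P_{i+1} = u C_{i+1} - P_i`, and `P_i ≤ k`, `k + 1 ≤ P_i + C_i`;
hence the complete quotients `(P_i + s) / C_{i+1}` of `s` have integer part `u` for `i < ℓ`.
Since `P_ℓ = k` and `C_{ℓ+1} = 1`, the last one is `s + k`: its integer part is `2k` and its
fractional part is that of `s`, so the expansion starts over.
-/

open Int

section ContFract

variable {K : Type*} [DivisionRing K] [LinearOrder K] [IsStrictOrderedRing K] [FloorRing K]

theorem GenContFract.of_s_get?_eq_of_inv_fract {v : K} {x : ℕ → K} (hv : fract v ≠ 0)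
    (hx₀ : (fract v)⁻¹ = x 0) (hx : ∀ n, fract (x n) ≠ 0)
    (hsucc : ∀ n, (fract (x n))⁻¹ = x (n + 1)) (n : ℕ) :
    (GenContFract.of v).s.get? n = some ⟨1, ⌊x n⌋⟩ := by
  induction n generalizing v x with
  | zero => rw [← hx₀]; exact of_s_head hv
  | succ n ih =>
    rw [of_s_succ]
    exact ih (hx₀ ▸ hx 0) (by rw [hx₀, hsucc]) (fun n => hx (n + 1)) (fun n => hsucc (n + 1))

theorem GenContFract.partDens_get?_eq_of_inv_fract {v : K} {x : ℕ → K} (hv : fract v ≠ 0)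
    (hx₀ : (fract v)⁻¹ = x 0) (hx : ∀ n, fract (x n) ≠ 0)
    (hsucc : ∀ n, (fract (x n))⁻¹ = x (n + 1)) (n : ℕ) :
    (GenContFract.of v).partDens.get? n = some (⌊x n⌋ : K) := by
  rw [partDens, Stream'.Seq.map_get?, of_s_get?_eq_of_inv_fract hv hx₀ hx hsucc]
  rfl

end ContFract

theorem apply_mod_eq_succ_mod_of_cycle {α : Type*} {g : α → α} {y : ℕ → α} {L : ℕ}
    (hy : ∀ j < L, g (y j) = y (j + 1)) (hL : g (y L) = y 0) (n : ℕ) :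
    g (y (n % (L + 1))) = y ((n + 1) % (L + 1)) := by
  have hj : n % (L + 1) < L + 1 := Nat.mod_lt n (Nat.zero_lt_succ L)
  rw [← Nat.mod_add_mod]
  rcases (Nat.lt_add_one_iff.1 hj).lt_or_eq with h | h
  · rw [Nat.mod_eq_of_lt (by omega : n % (L + 1) + 1 < L + 1), hy _ h]
  · rw [h, Nat.mod_self, hL]

theorem floor_div_eq_and_inv_fract_eq {K : Type*} [Field K] [LinearOrder K] [IsStrictOrderedRing K]
    [FloorRing K] {s p c p' c' : K} {a : ℤ} (hc : 0 < c) (hc' : c' ≠ 0) (hp' : p' = a * c - p)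
    (hlo : p' < s) (hhi : s < p' + c) (hcc : c * c' = s ^ 2 - p' ^ 2) :
    ⌊(p + s) / c⌋ = a ∧ fract ((p + s) / c) ≠ 0 ∧ (fract ((p + s) / c))⁻¹ = (p' + s) / c' := by
  have hfloor : ⌊(p + s) / c⌋ = a := by
    rw [Int.floor_eq_iff, le_div_iff₀ hc, div_lt_iff₀ hc]
    constructor <;> linarith
  have hfract : fract ((p + s) / c) = (s - p') / c := by
    rw [Int.fract, hfloor, hp']
    field_simp
    ring
  have hsp : 0 < s - p' := sub_pos.2 hlo
  refine ⟨hfloor, ?_, ?_⟩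
  · rw [hfract]
    exact (div_pos hsp hc).ne'
  · rw [hfract, inv_div, div_eq_div_iff hsp.ne' hc']
    linear_combination hcc

section Lucas

variable {R : Type*} [CommSemiring R] {u : R} {q : ℕ → R}

structure IsLucasSeq (u : R) (q : ℕ → R) : Prop where
  zero : q 0 = 0
  one : q 1 = 1
  add_two : ∀ n, q (n + 2) = u * q (n + 1) + q n

theorem IsLucasSeq.add_add_one (hq : IsLucasSeq u q) (m n : ℕ) :
    q (m + n + 1) = q (m + 1) * q (n + 1) + q m * q n := by
  induction m using Nat.twoStepInduction generalizing n with
  | zero => simp [hq.zero, hq.one]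
  | one => rw [Nat.add_comm 1 n, hq.add_two, hq.add_two 0, hq.zero, hq.one]; ring
  | more m ih₁ ih₂ =>
    rw [show m + 2 + n + 1 = (m + n + 1) + 2 by omega, hq.add_two,
      show m + n + 1 + 1 = (m + 1) + n + 1 by omega, ih₁, ih₂, hq.add_two (m + 1), hq.add_two m]
    ring

theorem IsLucasSeq.add_add_mul (hq : IsLucasSeq u q) (m n : ℕ) :
    q (m + n) + u * (q m * q n) = q m * q (n + 1) + q (m + 1) * q n := by
  cases m with
  | zero => simp [hq.zero, hq.one]
  | succ m =>
    rw [Nat.add_right_comm, hq.add_add_one, hq.add_two]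
    ring

theorem IsLucasSeq.monotone [PartialOrder R] [IsOrderedRing R] (hq : IsLucasSeq u q)
    (hu : 1 ≤ u) : Monotone q := by
  have h : ∀ n, 0 ≤ q n ∧ q n ≤ q (n + 1) := by
    intro n
    induction n with
    | zero => simp [hq.zero, hq.one]
    | succ n ih =>
      refine ⟨ih.1.trans ih.2, ?_⟩
      rw [hq.add_two]
      exact le_add_of_le_of_nonneg (le_mul_of_one_le_left (ih.1.trans ih.2) hu) ih.1
  exact monotone_nat_of_le_succ fun n => (h n).2

theorem IsLucasSeq.nonneg [PartialOrder R] [IsOrderedRing R] (hq : IsLucasSeq u q)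
    (hu : 1 ≤ u) (n : ℕ) : 0 ≤ q n :=
  hq.zero ▸ hq.monotone hu (Nat.zero_le n)

end Lucas

section CompleteQuotients

variable {R : Type*} [CommRing R] {u k t : R} {q : ℕ → R} {ℓ i : ℕ}

/-- `cqNum` and `cqDen` are the `P_i` and `C_i` of the header. -/
def cqNum (k t : R) (q : ℕ → R) (ℓ i : ℕ) : R := k - t * (q i * q (ℓ - i))

def cqDen (t : R) (q : ℕ → R) (ℓ i : ℕ) : R := 1 + t * (q i * q (ℓ + 1 - i))

theorem cqNum_zero (h0 : q 0 = 0) : cqNum k t q ℓ 0 = k := by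
  simp [cqNum, h0]

theorem cqNum_self (h0 : q 0 = 0) : cqNum k t q ℓ ℓ = k := by
  simp [cqNum, h0]

theorem cqDen_zero (h0 : q 0 = 0) : cqDen t q ℓ 0 = 1 := by
  simp [cqDen, h0]

theorem cqDen_succ_self (h0 : q 0 = 0) : cqDen t q ℓ (ℓ + 1) = 1 := by
  simp [cqDen, h0]

theorem cqNum_succ (hq : IsLucasSeq u q) (hk : 2 * k = t * q (ℓ + 1) + u) (hi : i < ℓ) :
    cqNum k t q ℓ (i + 1) = u * cqDen t q ℓ (i + 1) - cqNum k t q ℓ i := by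
  obtain ⟨r, rfl⟩ : ∃ r, ℓ = i + 1 + r := ⟨ℓ - (i + 1), by omega⟩
  have hadd : q (i + 1 + r + 1) = q (i + 2) * q (r + 1) + q (i + 1) * q r :=
    hq.add_add_one (i + 1) r
  simp only [cqNum, cqDen, show i + 1 + r - (i + 1) = r by omega,
    show i + 1 + r + 1 - (i + 1) = r + 1 by omega, show i + 1 + r - i = r + 1 by omega]
  linear_combination hk + t * hadd + t * q (r + 1) * hq.add_two i

theorem cqDen_mul_cqDen_succ (hq : IsLucasSeq u q) (hk : 2 * k = t * q (ℓ + 1) + u) (hi : i ≤ ℓ) :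
    cqDen t q ℓ i * cqDen t q ℓ (i + 1) = k ^ 2 + t * q ℓ + 1 - cqNum k t q ℓ i ^ 2 := by
  obtain ⟨r, rfl⟩ : ∃ r, ℓ = i + r := ⟨ℓ - i, by omega⟩
  have hadd := hq.add_add_one i r
  have hmul := hq.add_add_mul i r
  simp only [cqNum, cqDen, show i + r - i = r by omega, show i + r + 1 - i = r + 1 by omega,
    show i + r + 1 - (i + 1) = r by omega]
  linear_combination -t * q i * q r * hk - t ^ 2 * q i * q r * hadd - t * hmul

end CompleteQuotients

section Bounds

variable {R : Type*} [CommRing R] [LinearOrder R] [IsStrictOrderedRing R] {u k t : R}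
  {q : ℕ → R} {ℓ i : ℕ}

theorem cqNum_le (hq : IsLucasSeq u q) (hu : 1 ≤ u) (ht : 0 ≤ t) : cqNum k t q ℓ i ≤ k :=
  sub_le_self _ (mul_nonneg ht (mul_nonneg (hq.nonneg hu _) (hq.nonneg hu _)))

theorem cqDen_pos (hq : IsLucasSeq u q) (hu : 1 ≤ u) (ht : 0 ≤ t) : 0 < cqDen t q ℓ i :=
  add_pos_of_pos_of_nonneg one_pos (mul_nonneg ht (mul_nonneg (hq.nonneg hu _) (hq.nonneg hu _)))

theorem add_one_le_cqNum_add_cqDen (hq : IsLucasSeq u q) (hu : 1 ≤ u) (ht : 0 ≤ t) (hi : i ≤ ℓ) :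
    k + 1 ≤ cqNum k t q ℓ i + cqDen t q ℓ i := by
  have hmono : q (ℓ - i) ≤ q (ℓ + 1 - i) := hq.monotone hu (by omega)
  have : t * (q i * q (ℓ - i)) ≤ t * (q i * q (ℓ + 1 - i)) :=
    mul_le_mul_of_nonneg_left (mul_le_mul_of_nonneg_left hmono (hq.nonneg hu i)) ht
  simp only [cqNum, cqDen]
  linarith

end Bounds

section Sqrt

variable {K : Type*} [Field K] [LinearOrder K] [IsStrictOrderedRing K] {u k : ℕ} {t s : K}
  {q : ℕ → K} {ℓ : ℕ}

theorem lt_and_lt_add_one_of_sq_eq (hq : IsLucasSeq (u : K) q) (hu : 1 ≤ u) (ht : 0 ≤ t)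
    (hk : 2 * (k : K) = t * q (ℓ + 1) + u) (hs₀ : 0 ≤ s) (hs : s ^ 2 = k ^ 2 + t * q ℓ + 1) :
    (k : K) < s ∧ s < k + 1 := by
  have hu' : (1 : K) ≤ u := by exact_mod_cast hu
  have hmono : t * q ℓ ≤ t * q (ℓ + 1) := mul_le_mul_of_nonneg_left (hq.monotone hu' ℓ.le_succ) ht
  constructor
  · refine lt_of_pow_lt_pow_left₀ 2 hs₀ ?_
    rw [hs]
    nlinarith [mul_nonneg ht (hq.nonneg hu' ℓ)]
  · refine lt_of_pow_lt_pow_left₀ 2 (by positivity) ?_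
    rw [hs]
    linarith

variable [FloorRing K]

theorem GenContFract.of_h_and_partDens_of_sq_eq (hq : IsLucasSeq (u : K) q) (hu : 1 ≤ u)
    (ht : 0 ≤ t) (hk : 2 * (k : K) = t * q (ℓ + 1) + u) (hks : (k : K) < s) (hsk : s < k + 1)
    (hs : s ^ 2 = k ^ 2 + t * q ℓ + 1) :
    (GenContFract.of s).h = k ∧ ∀ n, (GenContFract.of s).partDens.get? n =
      some (if n % (ℓ + 1) = ℓ then (2 * k : K) else u) := by
  have hu' : (1 : K) ≤ u := by exact_mod_cast hu
  set y : ℕ → K := fun j => (cqNum (k : K) t q ℓ j + s) / cqDen t q ℓ (j + 1) with hy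
  have hfirst : ⌊s⌋ = k ∧ fract s ≠ 0 ∧ (fract s)⁻¹ = y 0 := by
    have := floor_div_eq_and_inv_fract_eq (p := 0) (c := 1) (a := k)
      (p' := cqNum (k : K) t q ℓ 0) (c' := cqDen t q ℓ 1) one_pos (cqDen_pos hq hu' ht).ne'
      (by simp [cqNum_zero hq.zero]) (by rwa [cqNum_zero hq.zero])
      (by rwa [cqNum_zero hq.zero])
      (by simpa only [cqDen_zero hq.zero, hs] using cqDen_mul_cqDen_succ hq hk (Nat.zero_le ℓ))
    simpa only [zero_add, div_one] using this
  have hstep : ∀ j < ℓ, ⌊y j⌋ = u ∧ fract (y j) ≠ 0 ∧ (fract (y j))⁻¹ = y (j + 1) := by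
    intro j hj
    refine floor_div_eq_and_inv_fract_eq (cqDen_pos hq hu' ht) (cqDen_pos hq hu' ht).ne'
      ?_ ?_ ?_ ?_
    · rw [cqNum_succ hq hk hj]; push_cast; ring
    · exact (cqNum_le hq hu' ht).trans_lt hks
    · exact hsk.trans_le (add_one_le_cqNum_add_cqDen hq hu' ht hj)
    · rw [cqDen_mul_cqDen_succ hq hk hj, hs]
  have hlast : y ℓ = s + k := by
    simp only [hy, cqNum_self hq.zero, cqDen_succ_self hq.zero, div_one, add_comm]
  have hcycle := apply_mod_eq_succ_mod_of_cycle (g := fun z => (fract z)⁻¹) (y := y) (L := ℓ)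
    (fun j hj => (hstep j hj).2.2) (by simp only [hlast, fract_add_natCast, hfirst.2.2])
  have hquot : ∀ j ≤ ℓ, fract (y j) ≠ 0 ∧ (⌊y j⌋ : K) = if j = ℓ then (2 * k : K) else u := by
    intro j hj
    rcases hj.lt_or_eq with hj | rfl
    · simp [(hstep j hj).1, (hstep j hj).2.1, hj.ne]
    · rw [hlast, fract_add_natCast, floor_add_natCast, hfirst.1, if_pos rfl]
      refine ⟨hfirst.2.1, ?_⟩
      push_cast
      ring
  have hmod (n : ℕ) : n % (ℓ + 1) ≤ ℓ := Nat.lt_add_one_iff.1 (Nat.mod_lt _ ℓ.succ_pos)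
  refine ⟨by rw [GenContFract.of_h_eq_floor, hfirst.1, Int.cast_natCast], fun n => ?_⟩
  rw [GenContFract.partDens_get?_eq_of_inv_fract (x := fun n => y (n % (ℓ + 1))) hfirst.2.1
    (by simpa using hfirst.2.2) (fun n => (hquot _ (hmod n)).1) hcycle, (hquot _ (hmod n)).2]

end Sqrt

theorem stmt12_general (u ℓ t k : ℕ) (hu : 0 < u)
    (Q : ℕ → ℕ) (h0 : Q 0 = 0) (h1 : Q 1 = 1)
    (hrec : ∀ n, Q (n + 2) = u * Q (n + 1) + Q n)
    (hk : 2 * k = Q (ℓ + 1) * t + u)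
    (D : ℕ) (hD : D = k ^ 2 + t * Q ℓ + 1) :
    ((GenContFract.of (Real.sqrt D)).h = (k : ℝ) ∧
      ∀ n : ℕ, (GenContFract.of (Real.sqrt D)).partDens.get? n =
        some (if n % (ℓ + 1) = ℓ then (2 * k : ℝ) else (u : ℝ))) ∧
    (D : ℚ) = (t : ℚ) ^ 2 * (Q (ℓ + 1) : ℚ) ^ 2 / 4 +
        (t : ℚ) * ((u : ℚ) * Q (ℓ + 1) + 2 * Q ℓ) / 2 + (u : ℚ) ^ 2 / 4 + 1 := by
  have hq : IsLucasSeq (u : ℝ) (fun n => (Q n : ℝ)) :=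
    ⟨by simp [h0], by simp [h1], fun n => by simp [hrec]⟩
  have hkR : 2 * (k : ℝ) = t * Q (ℓ + 1) + u := by rw [mul_comm (t : ℝ)]; exact_mod_cast hk
  have hs : √(D : ℝ) ^ 2 = k ^ 2 + t * Q ℓ + 1 := by
    rw [Real.sq_sqrt (Nat.cast_nonneg D), hD]
    push_cast
    rfl
  obtain ⟨hks, hsk⟩ :=
    lt_and_lt_add_one_of_sq_eq hq hu (Nat.cast_nonneg t) hkR (Real.sqrt_nonneg _) hs
  refine ⟨GenContFract.of_h_and_partDens_of_sq_eq hq hu (Nat.cast_nonneg t) hkR hks hsk hs, ?_⟩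
  have hkQ : 2 * (k : ℚ) = Q (ℓ + 1) * t + u := by exact_mod_cast hk
  rw [hD]
  push_cast
  linear_combination (2 * (k : ℚ) + Q (ℓ + 1) * t + u) / 4 * hkQ

/-- If `u` and `q_ℓ` have the same parity and `2k = q_ℓ t + u` (with `t` odd if `u` is
odd), then `√D = [k; \overline{u,…,u,2k}]` where
`D = k² + t q_{ℓ-1} + 1 = t² q_ℓ²/4 + t(u q_ℓ + 2 q_{ℓ-1})/2 + u²/4 + 1`.
Here `Q n = q_{n-1}`. -/
theorem stmt12 (u ℓ t k : ℕ) (hu : 0 < u) (hℓ : 1 ≤ ℓ) (ht : 1 ≤ t)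
    (Q : ℕ → ℕ) (h0 : Q 0 = 0) (h1 : Q 1 = 1)
    (hrec : ∀ n, Q (n + 2) = u * Q (n + 1) + Q n)
    (hpar : u % 2 = Q (ℓ + 1) % 2)
    (htodd : Odd u → Odd t)
    (hk : 2 * k = Q (ℓ + 1) * t + u)
    (D : ℕ) (hD : D = k ^ 2 + t * Q ℓ + 1) :
    ((GenContFract.of (Real.sqrt D)).h = (k : ℝ) ∧
      ∀ n : ℕ, (GenContFract.of (Real.sqrt D)).partDens.get? n =
        some (if n % (ℓ + 1) = ℓ then (2 * k : ℝ) else (u : ℝ))) ∧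
    (D : ℚ) = (t : ℚ) ^ 2 * (Q (ℓ + 1) : ℚ) ^ 2 / 4 +
        (t : ℚ) * ((u : ℚ) * Q (ℓ + 1) + 2 * Q ℓ) / 2 + (u : ℚ) ^ 2 / 4 + 1 :=
  stmt12_general u ℓ t k hu Q h0 h1 hrec hk D hD
end

section
/- In the setting √D = [k; \overline{u,…,u,2k}] with 2k = q_ℓ t + u, let α_i = p_i + q_i √D where p_i/q_i are the convergents, for 0 ≤ i ≤ ℓ. Then N(α_i) = p_i² − D q_i² = (−1)^{i+1}(t q_i q_{ℓ−i−1} + 1). -/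
/-- With `2k = q_ℓ t + u`, `D = k² + t q_{ℓ-1} + 1`, `p_i = k q_i + q_{i-1}`, the norms
of `α_i = p_i + q_i √D` satisfy `N(α_i) = (-1)^{i+1} (t q_i q_{ℓ-i-1} + 1)` for
`0 ≤ i ≤ ℓ`.  Here `Q n = q_{n-1}` and `P i = p_i`. -/
theorem stmt13 (u ℓ t k : ℕ) (hu : 0 < u) (hℓ : 1 ≤ ℓ)
    (Q : ℕ → ℤ) (h0 : Q 0 = 0) (h1 : Q 1 = 1)
    (hrec : ∀ n, Q (n + 2) = u * Q (n + 1) + Q n)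
    (hk : 2 * (k : ℤ) = Q (ℓ + 1) * t + u)
    (D : ℤ) (hD : D = (k : ℤ) ^ 2 + t * Q ℓ + 1)
    (P : ℕ → ℤ) (hP : ∀ i, P i = k * Q (i + 1) + Q i) :
    ∀ i : ℕ, i ≤ ℓ →
      P i ^ 2 - D * Q (i + 1) ^ 2 = (-1) ^ (i + 1) * (t * Q (i + 1) * Q (ℓ - i) + 1) := by
  have det : ∀ i, Q (i + 2) * Q i - Q (i + 1) ^ 2 = (-1 : ℤ) ^ (i + 1) := by
    intro i
    induction i with
    | zero => simp [h0, h1]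
    | succ n ih => linear_combination -ih + Q (n + 1) * hrec (n + 1) - Q (n + 2) * hrec n
  have key : ∀ i, i ≤ ℓ → Q (ℓ + 1) * Q i - Q ℓ * Q (i + 1) = (-1 : ℤ) ^ (i + 1) * Q (ℓ - i) := by
    intro i
    induction i using Nat.strong_induction_on with
    | _ i ih =>
      match i with
      | 0 =>
        intro _
        simp only [h0, h1, Nat.sub_zero]
        ring
      | 1 =>
        intro hle
        obtain ⟨m, rfl⟩ : ∃ m, ℓ = m + 1 := ⟨ℓ - 1, by omega⟩
        simp only [show m + 1 - 1 = m from rfl]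
        linear_combination Q 1 * hrec m - Q (m + 1) * hrec 0 - Q (m + 1) * h0 + Q m * h1
      | (n + 2) =>
        intro hle
        obtain ⟨d, rfl⟩ : ∃ d, ℓ = d + (n + 2) := ⟨ℓ - (n + 2), by omega⟩
        have A := ih n (by omega) (by omega)
        have B := ih (n + 1) (by omega) (by omega)
        rw [show d + (n + 2) - n = d + 2 from by omega] at A
        rw [show d + (n + 2) - (n + 1) = d + 1 from by omega] at B
        rw [show d + (n + 2) - (n + 2) = d from by omega]
        linear_combination A + (u : ℤ) * B + Q (d + (n + 2) + 1) * hrec n -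
          Q (d + (n + 2)) * hrec (n + 1) + (-1 : ℤ) ^ (n + 1) * hrec d
  intro i hi
  rw [hP, hD]
  linear_combination (Q (i + 1) * Q i) * hk + ((t : ℤ) * Q (i + 1)) * key i hi + det i -
    Q i * hrec i
end

section
/- Let √D = [k; \overline{u,…,u,2k}] with k > u ≥ 5 and D squarefree, D ≡ 2 or 3 (mod 4). Let α_n = p_n + q_n√D be the convergent elements. Then for odd i < j ≤ (ℓ−4)/2, there is no integer h ≥ 0 such that α_i α_j − α_h² is totally positive. -/
/-!
Throughout the first period all partial quotients equal `u`, so `α_n = p_n + q_n √D` and its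
conjugate `α'_n = p_n - q_n √D` both satisfy `x (n + 2) = u x (n + 1) + x n` there. For such a
sequence Catalan's identity reads `x_i x_{i+2t} - x_{i+t}² = (-1)^i F_t² (x_0 x_2 - x_1²)`, with
`F_t` the Fibonacci polynomials at `u`. Put `j = i + 2t` and `m = i + t`.

For `α`, `x_0 x_2 - x_1² = w (w - u) - 1 > 0` where `w = k + √D`, so for odd `i` we get
`α_i α_j < α_m² ≤ α_h²` whenever `h ≥ m`. For `α'` this invariant equals
`±(α'_j α'_{j+2} - α'_{j+1}²)`, hence is at most `2 / q_{j+1}²`, and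
`α'_i α'_j ≤ 3 / q_{m+1}²`.
If `h < m`, the determinant formula gives the classical bound `|α'_h| ≥ 1 / (2 q_{h+1})`, and
`q_{m+1} ≥ u q_{h+1}` with `u ≥ 4` makes `α'_h²` the larger.
-/

section FibRec

variable {R : Type*} [CommRing R]

def fibPoly (u : R) : ℕ → R
  | 0 => 0
  | 1 => 1
  | n + 2 => u * fibPoly u (n + 1) + fibPoly u n

@[simp] lemma fibPoly_zero (u : R) : fibPoly u 0 = 0 := rfl

@[simp] lemma fibPoly_one (u : R) : fibPoly u 1 = 1 := rfl

lemma fibPoly_add_two (u : R) (n : ℕ) :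
    fibPoly u (n + 2) = u * fibPoly u (n + 1) + fibPoly u n := rfl

def FibRecUpTo (u : R) (N : ℕ) (x : ℕ → R) : Prop :=
  ∀ n, n + 2 ≤ N → x (n + 2) = u * x (n + 1) + x n

lemma fibRecUpTo_fibPoly (u : R) (N : ℕ) : FibRecUpTo u N (fibPoly u) := fun _ _ => rfl

namespace FibRecUpTo

variable {u : R} {N : ℕ} {x y : ℕ → R}

lemma add_mul (hx : FibRecUpTo u N x) (hy : FibRecUpTo u N y) (c : R) :
    FibRecUpTo u N (fun n => x n + y n * c) := fun n hn => by
  simp only [hx n hn, hy n hn]; ring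

lemma sub_mul (hx : FibRecUpTo u N x) (hy : FibRecUpTo u N y) (c : R) :
    FibRecUpTo u N (fun n => x n - y n * c) := fun n hn => by
  simp only [hx n hn, hy n hn]; ring

lemma eq_fibPoly_mul_add (hx : FibRecUpTo u N x) {a b : ℕ} (h : a + b + 1 ≤ N) :
    x (a + b + 1) = fibPoly u (a + 1) * x (b + 1) + fibPoly u a * x b := by
  induction a generalizing b with
  | zero => simp
  | succ a ih =>
    rw [show a + 1 + b + 1 = a + (b + 1) + 1 by ring, ih (by omega), hx b (by omega),
      fibPoly_add_two]
    ring

lemma mul_sub_sq_eq_neg_one_pow (hx : FibRecUpTo u N x) {n : ℕ} (h : n + 2 ≤ N) :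
    x n * x (n + 2) - x (n + 1) ^ 2 = (-1) ^ n * (x 0 * x 2 - x 1 ^ 2) := by
  induction n with
  | zero => simp
  | succ n ih =>
    linear_combination (-1) * ih (by omega) + x (n + 1) * hx (n + 1) h - x (n + 2) * hx n (by omega)

/-- Catalan's identity. -/
lemma mul_sub_sq_eq (hx : FibRecUpTo u N x) {i t : ℕ} (h : i + 2 * t ≤ N) :
    x i * x (i + 2 * t) - x (i + t) ^ 2 =
      fibPoly u t ^ 2 * (x i * x (i + 2) - x (i + 1) ^ 2) := by
  rcases t with _ | s
  · simp [sq]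
  have hmid := hx.eq_fibPoly_mul_add (a := s) (b := i) (by omega)
  have hend := hx.eq_fibPoly_mul_add (a := 2 * s + 1) (b := i) (by omega)
  have hF := fibRecUpTo_fibPoly u (2 * s + 3)
  have hodd := hF.eq_fibPoly_mul_add (a := s) (b := s) (by omega)
  have hevn := hF.eq_fibPoly_mul_add (a := s + 1) (b := s) (by omega)
  rw [show s + i + 1 = i + (s + 1) by ring] at hmid
  rw [show 2 * s + 1 + i + 1 = i + 2 * (s + 1) by ring] at hend
  rw [show s + s + 1 = 2 * s + 1 by ring] at hodd
  rw [show s + 1 + s + 1 = 2 * s + 1 + 1 by ring] at hevn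
  rw [hmid, hend, hevn, hodd, hx i (by omega), fibPoly_add_two]
  ring

end FibRecUpTo

end FibRec

section Ordered

variable {R : Type*} [CommRing R] [LinearOrder R] [IsStrictOrderedRing R] {u : R}

lemma fibPoly_succ_pos (hu : 0 < u) (n : ℕ) : 0 < fibPoly u (n + 1) := by
  suffices ∀ n, 0 < fibPoly u (n + 1) ∧ 0 < fibPoly u (n + 2) from (this n).1
  intro n
  induction n with
  | zero => exact ⟨one_pos, by simpa [fibPoly_add_two] using hu⟩
  | succ n ih =>
    refine ⟨ih.2, ?_⟩
    rw [fibPoly_add_two]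
    have := ih.2
    have := ih.1
    positivity

lemma fibPoly_nonneg (hu : 0 < u) (n : ℕ) : 0 ≤ fibPoly u n := by
  rcases n with _ | n
  · rfl
  · exact (fibPoly_succ_pos hu n).le

lemma FibRecUpTo.mul_lt_sq_of_odd {N : ℕ} {x : ℕ → R} (hx : FibRecUpTo u N x) (hu : 0 < u)
    (hδ : 0 < x 0 * x 2 - x 1 ^ 2) {i t : ℕ} (hi : Odd i) (ht : t ≠ 0) (h : i + 2 * t ≤ N) :
    x i * x (i + 2 * t) < x (i + t) ^ 2 := by
  have hcat := hx.mul_sub_sq_eq h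
  rw [hx.mul_sub_sq_eq_neg_one_pow (by omega), hi.neg_one_pow] at hcat
  have hF : 0 < fibPoly u t := by
    obtain ⟨s, rfl⟩ := Nat.exists_eq_add_one_of_ne_zero ht
    exact fibPoly_succ_pos hu s
  nlinarith [mul_pos (pow_pos hF 2) hδ]

lemma FibRecUpTo.fibPoly_mul_le {N : ℕ} {x : ℕ → R} (hx : FibRecUpTo u N x) (hu : 0 < u)
    {a b : ℕ} (hb : 0 ≤ x b) (h : a + b + 1 ≤ N) :
    fibPoly u (a + 1) * x (b + 1) ≤ x (a + b + 1) := by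
  rw [hx.eq_fibPoly_mul_add h]
  nlinarith [fibPoly_nonneg hu a]

lemma FibRecUpTo.abs_mul_sub_sq_eq {N : ℕ} {x : ℕ → R} (hx : FibRecUpTo u N x) {m n : ℕ}
    (hm : m + 2 ≤ N) (hn : n + 2 ≤ N) :
    |x m * x (m + 2) - x (m + 1) ^ 2| = |x n * x (n + 2) - x (n + 1) ^ 2| := by
  simp [hx.mul_sub_sq_eq_neg_one_pow hm, hx.mul_sub_sq_eq_neg_one_pow hn, abs_mul]

end Ordered

namespace GenContFract

open GenContFract (of)

variable {K : Type*} [Field K] [LinearOrder K] [FloorRing K] {v u : K} {n N : ℕ}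

def numAddDenMul (v : K) (n : ℕ) : K := (of v).nums n + (of v).dens n * v

def numSubDenMul (v : K) (n : ℕ) : K := (of v).nums n - (of v).dens n * v

theorem of_nums_one {b : K} (h : (of v).partDens.get? 0 = some b) :
    (of v).nums 1 = b * (of v).h + 1 := by
  obtain ⟨gp, hs, rfl⟩ := exists_s_b_of_partDen h
  rw [first_num_eq hs, of_partNum_eq_one (partNum_eq_s_a hs)]

theorem of_dens_one {b : K} (h : (of v).partDens.get? 0 = some b) : (of v).dens 1 = b := by
  obtain ⟨gp, hs, rfl⟩ := exists_s_b_of_partDen h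
  exact first_den_eq hs

theorem of_nums_add_two {b : K} (h : (of v).partDens.get? (n + 1) = some b) :
    (of v).nums (n + 2) = b * (of v).nums (n + 1) + (of v).nums n := by
  obtain ⟨gp, hs, rfl⟩ := exists_s_b_of_partDen h
  rw [nums_recurrence hs rfl rfl, of_partNum_eq_one (partNum_eq_s_a hs), one_mul]

theorem of_dens_add_two {b : K} (h : (of v).partDens.get? (n + 1) = some b) :
    (of v).dens (n + 2) = b * (of v).dens (n + 1) + (of v).dens n := by
  obtain ⟨gp, hs, rfl⟩ := exists_s_b_of_partDen h
  rw [dens_recurrence hs rfl rfl, of_partNum_eq_one (partNum_eq_s_a hs), one_mul]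

theorem fibRecUpTo_of_nums (hpd : ∀ n < N, (of v).partDens.get? n = some u) :
    FibRecUpTo u N (of v).nums := fun n hn => of_nums_add_two (hpd (n + 1) (by omega))

theorem fibRecUpTo_of_dens (hpd : ∀ n < N, (of v).partDens.get? n = some u) :
    FibRecUpTo u N (of v).dens := fun n hn => of_dens_add_two (hpd (n + 1) (by omega))

variable [IsStrictOrderedRing K]

theorem of_den_monotone : Monotone (of v).dens :=
  monotone_nat_of_le_succ fun _ => of_den_mono

theorem one_le_of_den : 1 ≤ (of v).dens n :=
  zeroth_den_eq_one (g := of v) ▸ of_den_monotone n.zero_le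

theorem of_num_monotone (hv : 0 ≤ v) : Monotone (of v).nums := by
  suffices ∀ n, 0 ≤ (of v).nums n ∧ (of v).nums n ≤ (of v).nums (n + 1) from
    monotone_nat_of_le_succ fun n => (this n).2
  intro n
  induction n with
  | zero =>
    have h0 : 0 ≤ (of v).nums 0 := by
      rw [zeroth_num_eq_h, of_h_eq_floor]
      exact_mod_cast Int.floor_nonneg.mpr hv
    refine ⟨h0, ?_⟩
    cases hb : (of v).partDens.get? 0 with
    | none =>
      exact (nums_stable_of_terminated zero_le_one (terminatedAt_iff_partDen_none.mpr hb)).ge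
    | some b =>
      rw [of_nums_one hb, ← zeroth_num_eq_h]
      nlinarith [of_one_le_get?_partDen hb]
  | succ n ih =>
    refine ⟨ih.1.trans ih.2, ?_⟩
    cases hb : (of v).partDens.get? (n + 1) with
    | none =>
      exact (nums_stable_of_terminated (n + 1).le_succ
        (terminatedAt_iff_partDen_none.mpr hb)).ge
    | some b =>
      rw [of_nums_add_two hb]
      nlinarith [of_one_le_get?_partDen hb, ih.1, ih.2]

theorem numAddDenMul_monotone (hv : 0 ≤ v) : Monotone (numAddDenMul v) :=
  (of_num_monotone hv).add (of_den_monotone.mul_const hv)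

theorem abs_numSubDenMul_le (hn : ¬(of v).TerminatedAt n) :
    |numSubDenMul v n| ≤ 1 / (of v).dens (n + 1) := by
  have hQ : 0 < (of v).dens n := one_pos.trans_le one_le_of_den
  have h := abs_sub_convs_le hn
  rw [conv_eq_num_div_den] at h
  calc |numSubDenMul v n| = (of v).dens n * |v - (of v).nums n / (of v).dens n| := by
        rw [← abs_of_pos hQ, ← abs_mul, abs_of_pos hQ, numSubDenMul, abs_sub_comm, mul_sub,
          mul_div_cancel₀ _ hQ.ne', mul_comm]
    _ ≤ (of v).dens n * (1 / ((of v).dens n * (of v).dens (n + 1))) :=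
        mul_le_mul_of_nonneg_left h hQ.le
    _ = 1 / (of v).dens (n + 1) := by field_simp

theorem one_div_two_mul_den_le_abs_numSubDenMul (hn : ¬(of v).TerminatedAt (n + 1)) :
    1 / (2 * (of v).dens (n + 1)) ≤ |numSubDenMul v n| := by
  set e := numSubDenMul v
  have hdet : e n * (of v).dens (n + 1) - (of v).dens n * e (n + 1) = (-1) ^ (n + 1) := by
    have h : (of v).nums n * (of v).dens (n + 1) - (of v).dens n * (of v).nums (n + 1) =
        (-1) ^ (n + 1) :=
      SimpContFract.determinant (s := SimpContFract.of v) (mt (terminated_stable n.le_succ) hn)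
    simp only [e, numSubDenMul]
    linear_combination h
  obtain ⟨b, hb⟩ := Option.ne_none_iff_exists'.mp (mt terminatedAt_iff_partDen_none.mpr hn)
  have hQn : 1 ≤ (of v).dens n := one_le_of_den
  have hQn1 : 1 ≤ (of v).dens (n + 1) := one_le_of_den
  have hQ2 : 2 * (of v).dens n ≤ (of v).dens (n + 2) := by
    rw [of_dens_add_two hb]
    nlinarith [of_one_le_get?_partDen hb, of_den_mono (v := v) (n := n)]
  have hsum : 1 ≤ |e n| * (of v).dens (n + 1) + (of v).dens n * |e (n + 1)| :=
    calc (1 : K) = |e n * (of v).dens (n + 1) - (of v).dens n * e (n + 1)| := by simp [hdet]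
      _ ≤ |e n * (of v).dens (n + 1)| + |(of v).dens n * e (n + 1)| := abs_sub _ _
      _ = |e n| * (of v).dens (n + 1) + (of v).dens n * |e (n + 1)| := by
        rw [abs_mul, abs_mul, abs_of_pos (by linarith : (0 : K) < (of v).dens (n + 1)),
          abs_of_pos (by linarith : (0 : K) < (of v).dens n)]
  have hnext : (of v).dens n * |e (n + 1)| ≤ 1 / 2 :=
    calc (of v).dens n * |e (n + 1)| ≤ (of v).dens n * (1 / (of v).dens (n + 2)) :=
          mul_le_mul_of_nonneg_left (abs_numSubDenMul_le hn) (by linarith)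
      _ ≤ 1 / 2 := by
        rw [mul_one_div, div_le_iff₀ (by linarith)]
        linarith
  rw [div_le_iff₀ (by linarith)]
  linarith

theorem abs_numSubDenMul_mul_sub_sq_le (hn : ¬(of v).TerminatedAt (n + 2)) :
    |numSubDenMul v n * numSubDenMul v (n + 2) - numSubDenMul v (n + 1) ^ 2| ≤
      2 / (of v).dens (n + 1) ^ 2 := by
  set e := numSubDenMul v
  have hQ : 0 < (of v).dens (n + 1) := one_pos.trans_le one_le_of_den
  have bound : ∀ k, n ≤ k → k ≤ n + 2 → |e k| ≤ 1 / (of v).dens (n + 1) :=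
    fun k hnk hkn =>
    (abs_numSubDenMul_le (mt (terminated_stable hkn) hn)).trans
      (one_div_le_one_div_of_le hQ (of_den_monotone (by omega)))
  calc |e n * e (n + 2) - e (n + 1) ^ 2| ≤ |e n| * |e (n + 2)| + |e (n + 1)| ^ 2 := by
        rw [← abs_mul, ← abs_pow]
        exact abs_sub _ _
    _ ≤ 1 / (of v).dens (n + 1) * (1 / (of v).dens (n + 1)) + (1 / (of v).dens (n + 1)) ^ 2 := by
        gcongr
        · exact bound n le_rfl (by omega)
        · exact bound (n + 2) (by omega) le_rfl
        · exact bound (n + 1) (by omega) (by omega)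
    _ = 2 / (of v).dens (n + 1) ^ 2 := by ring

theorem mul_numAddDenMul_lt_sq (hv : 0 ≤ v) (hpd : ∀ n < N, (of v).partDens.get? n = some u)
    (hu : 0 < u) (hh : u + 1 ≤ (of v).h) {i t h : ℕ} (hi : Odd i) (ht : t ≠ 0)
    (hth : i + t ≤ h) (hN : i + 2 * t ≤ N) :
    numAddDenMul v i * numAddDenMul v (i + 2 * t) < numAddDenMul v h ^ 2 := by
  set x := numAddDenMul v
  have hx : FibRecUpTo u N x := (fibRecUpTo_of_nums hpd).add_mul (fibRecUpTo_of_dens hpd) v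
  have hN2 : 2 ≤ N := by obtain ⟨c, rfl⟩ := hi; omega
  have hx0 : x 0 = (of v).h + v := by
    simp only [x, numAddDenMul, zeroth_num_eq_h, zeroth_den_eq_one, one_mul]
  have hx1 : x 1 = u * x 0 + 1 := by
    rw [hx0]
    simp only [x, numAddDenMul, of_nums_one (hpd 0 (by omega)), of_dens_one (hpd 0 (by omega))]
    ring
  have hδ : 0 < x 0 * x 2 - x 1 ^ 2 := by
    have hw : u + 1 ≤ x 0 := by rw [hx0]; linarith
    rw [hx 0 hN2, hx1]
    nlinarith
  have hxm : 0 ≤ x (i + t) := by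
    linarith [numAddDenMul_monotone hv (Nat.zero_le (i + t))]
  calc x i * x (i + 2 * t) < x (i + t) ^ 2 := hx.mul_lt_sq_of_odd hu hδ hi ht hN
    _ ≤ x h ^ 2 := pow_le_pow_left₀ hxm (numAddDenMul_monotone hv hth) 2

theorem mul_numSubDenMul_le (hpd : ∀ n < N, (of v).partDens.get? n = some u) (hu : 0 < u)
    {i t : ℕ} (ht : t ≠ 0) (hN : i + 2 * t + 3 ≤ N) :
    numSubDenMul v i * numSubDenMul v (i + 2 * t) ≤ 3 / (of v).dens (i + t + 1) ^ 2 := by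
  set e := numSubDenMul v
  set j := i + 2 * t
  set m := i + t
  set A := (of v).dens (m + 1)
  have he : FibRecUpTo u N e := (fibRecUpTo_of_nums hpd).sub_mul (fibRecUpTo_of_dens hpd) v
  have hnt : ¬(of v).TerminatedAt (j + 2) := by
    simp [terminatedAt_iff_partDen_none, hpd (j + 2) (by omega)]
  have hA : 0 < A := one_pos.trans_le one_le_of_den
  have hcat : e i * e j - e m ^ 2 = fibPoly u t ^ 2 * (e i * e (i + 2) - e (i + 1) ^ 2) :=
    he.mul_sub_sq_eq (by omega)
  have hE : |e i * e (i + 2) - e (i + 1) ^ 2| ≤ 2 / (of v).dens (j + 1) ^ 2 :=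
    (he.abs_mul_sub_sq_eq (by omega) (by omega)).trans_le (abs_numSubDenMul_mul_sub_sq_le hnt)
  obtain ⟨s, rfl⟩ := Nat.exists_eq_add_one_of_ne_zero ht
  have hFA : fibPoly u (s + 1) * A ≤ (of v).dens (j + 1) :=
    ((fibRecUpTo_of_dens hpd).fibPoly_mul_le hu zero_le_of_den (by omega)).trans
      (of_den_monotone (by omega))
  have herr : fibPoly u (s + 1) ^ 2 * |e i * e (i + 2) - e (i + 1) ^ 2| ≤ 2 / A ^ 2 :=
    calc fibPoly u (s + 1) ^ 2 * |e i * e (i + 2) - e (i + 1) ^ 2|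
        ≤ fibPoly u (s + 1) ^ 2 * (2 / (of v).dens (j + 1) ^ 2) :=
          mul_le_mul_of_nonneg_left hE (sq_nonneg _)
      _ ≤ 2 / A ^ 2 := by
        rw [mul_div_assoc', div_le_div_iff₀ (pow_pos (hA.trans_le (of_den_monotone
          (by omega))) 2) (by positivity)]
        nlinarith [mul_pos (fibPoly_succ_pos hu s) hA]
  have hem : e m ^ 2 ≤ 1 / A ^ 2 :=
    calc e m ^ 2 = |e m| ^ 2 := (sq_abs _).symm
      _ ≤ (1 / A) ^ 2 :=
          pow_le_pow_left₀ (abs_nonneg _) (abs_numSubDenMul_le (mt (terminated_stable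
            (by omega)) hnt)) 2
      _ = 1 / A ^ 2 := one_div_pow A 2
  have hsgn := le_abs_self (fibPoly u (s + 1) ^ 2 * (e i * e (i + 2) - e (i + 1) ^ 2))
  rw [abs_mul, abs_of_nonneg (sq_nonneg _)] at hsgn
  calc e i * e j ≤ 1 / A ^ 2 + 2 / A ^ 2 := by linarith
    _ = 3 / A ^ 2 := by ring

theorem mul_numSubDenMul_lt_sq (hpd : ∀ n < N, (of v).partDens.get? n = some u) (hu : 4 ≤ u)
    {i t h : ℕ} (ht : t ≠ 0) (hth : h < i + t) (hN : i + 2 * t + 3 ≤ N) :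
    numSubDenMul v i * numSubDenMul v (i + 2 * t) < numSubDenMul v h ^ 2 := by
  set A := (of v).dens (i + t + 1)
  have hA : 0 < A := one_pos.trans_le one_le_of_den
  have hB : 1 ≤ (of v).dens (h + 1) := one_le_of_den
  have hBA : 4 * (of v).dens (h + 1) ≤ A :=
    calc 4 * (of v).dens (h + 1) ≤ (of v).dens (h + 2) := by
          rw [fibRecUpTo_of_dens hpd h (by omega)]
          nlinarith [one_le_of_den (v := v) (n := h)]
      _ ≤ A := of_den_monotone (by omega)
  have hnt : ¬(of v).TerminatedAt (h + 1) := by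
    simp [terminatedAt_iff_partDen_none, hpd (h + 1) (by omega)]
  calc numSubDenMul v i * numSubDenMul v (i + 2 * t) ≤ 3 / A ^ 2 :=
        mul_numSubDenMul_le hpd (by linarith) ht hN
    _ < 4 / A ^ 2 := div_lt_div_of_pos_right (by norm_num) (by positivity)
    _ ≤ (1 / (2 * (of v).dens (h + 1))) ^ 2 := by
        rw [div_pow, div_le_div_iff₀ (by positivity) (by positivity)]
        nlinarith
    _ ≤ |numSubDenMul v h| ^ 2 :=
        pow_le_pow_left₀ (by positivity) (one_div_two_mul_den_le_abs_numSubDenMul hnt) 2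
    _ = numSubDenMul v h ^ 2 := sq_abs _

end GenContFract

theorem stmt15_general (D u k ℓ : ℕ)
    (hu : 5 ≤ u) (hk : u < k)
    (hh : (GenContFract.of (Real.sqrt D)).h = (k : ℝ))
    (hcf : ∀ n : ℕ, (GenContFract.of (Real.sqrt D)).partDens.get? n =
      some (if n % (ℓ + 1) = ℓ then (2 * k : ℝ) else (u : ℝ)))
    (α α' : ℕ → ℝ)
    (hα : ∀ n, α n = (GenContFract.of (Real.sqrt D)).nums n +
      (GenContFract.of (Real.sqrt D)).dens n * Real.sqrt D)
    (hα' : ∀ n, α' n = (GenContFract.of (Real.sqrt D)).nums n -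
      (GenContFract.of (Real.sqrt D)).dens n * Real.sqrt D) :
    ∀ i j : ℕ, Odd i → Odd j → i < j → 2 * j + 4 ≤ ℓ →
      ∀ h : ℕ, ¬(0 < α i * α j - α h ^ 2 ∧ 0 < α' i * α' j - α' h ^ 2) := by
  intro i j hi hj hij hjℓ h ⟨hαh, hα'h⟩
  obtain ⟨t, rfl, ht⟩ : ∃ t, j = i + 2 * t ∧ t ≠ 0 := by
    obtain ⟨a, rfl⟩ := hi
    obtain ⟨b, rfl⟩ := hj
    exact ⟨b - a, by omega, by omega⟩
  have hpd : ∀ n < ℓ, (GenContFract.of (Real.sqrt D)).partDens.get? n = some (u : ℝ) :=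
    fun n hn => by rw [hcf, if_neg (by rw [Nat.mod_eq_of_lt (by omega)]; omega)]
  have hαe : GenContFract.numAddDenMul (Real.sqrt D) = α := (funext hα).symm
  have hα'e : GenContFract.numSubDenMul (Real.sqrt D) = α' := (funext hα').symm
  rcases le_or_gt (i + t) h with hth | hth
  · have hlt := GenContFract.mul_numAddDenMul_lt_sq (Real.sqrt_nonneg _) hpd (by positivity)
      (by rw [hh]; exact_mod_cast hk) hi ht hth (by omega)
    rw [hαe] at hlt
    linarith
  · have hlt := GenContFract.mul_numSubDenMul_lt_sq hpd (by exact_mod_cast (by omega : 4 ≤ u))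
      ht hth (by omega)
    rw [hα'e] at hlt
    linarith

/-- With `√D = [k; \overline{u,…,u,2k}]`, `k > u ≥ 5`, `D ≡ 2, 3 (mod 4)` squarefree,
and `α_n = p_n + q_n √D` the convergent elements: for odd `i < j ≤ (ℓ-4)/2` there is
no `h ≥ 0` with `α_i α_j - α_h²` totally positive. -/
theorem stmt15 (D u k ℓ : ℕ) (hD : Squarefree D) (hD4 : D % 4 = 2 ∨ D % 4 = 3)
    (hu : 5 ≤ u) (hk : u < k)
    (hh : (GenContFract.of (Real.sqrt D)).h = (k : ℝ))
    (hcf : ∀ n : ℕ, (GenContFract.of (Real.sqrt D)).partDens.get? n =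
      some (if n % (ℓ + 1) = ℓ then (2 * k : ℝ) else (u : ℝ)))
    (α α' : ℕ → ℝ)
    (hα : ∀ n, α n = (GenContFract.of (Real.sqrt D)).nums n +
      (GenContFract.of (Real.sqrt D)).dens n * Real.sqrt D)
    (hα' : ∀ n, α' n = (GenContFract.of (Real.sqrt D)).nums n -
      (GenContFract.of (Real.sqrt D)).dens n * Real.sqrt D) :
    ∀ i j : ℕ, Odd i → Odd j → i < j → 2 * j + 4 ≤ ℓ →
      ∀ h : ℕ, ¬(0 < α i * α j - α h ^ 2 ∧ 0 < α' i * α' j - α' h ^ 2) :=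
  stmt15_general D u k ℓ hu hk hh hcf α α' hα hα'
end
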